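/- Necessity direction of Lemma 2: Let {Π_m}_{m=1}^M be a POVM with rank-one operators on the 2-dimensional subspace H of C² ⊗ H_B. If there exist POVMs {Φ_m^{(0)}} on H_B^{(0)} and {Φ_m^{(1)}} on H_B^{(1)} with Π_m = P(|0⟩⟨0|_A ⊗ Φ_m^{(0)} + |1⟩⟨1|_A ⊗ Φ_m^{(1)})P for all m, then there exist numbers c_m ∈ [0,1] with Σ_m c_m Π_m = Z_0, where Z_0 = P(|0⟩⟨0|_A ⊗ I_B)P. -/

import Mathlib

noncomputable section
open scoped InnerProductSpace ComplexConjugate ComplexOrder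

variable {E F : Type*} [NormedAddCommGroup E] [InnerProductSpace ℂ E]
  [NormedAddCommGroup F] [InnerProductSpace ℂ F]

/-- rank-one operator |x⟩⟨y| : E → F -/
def rankOne (x : F) (y : E) : E →ₗ[ℂ] F where
  toFun z := ⟪y, z⟫_ℂ • x
  map_add' a b := by simp [inner_add_right, add_smul]
  map_smul' c a := by simp [inner_smul_right, smul_smul]

/-- positive semidefinite operator (using the complex partial order) -/
def IsPSD {E : Type*} [NormedAddCommGroup E] [InnerProductSpace ℂ E]
    (T : E →ₗ[ℂ] E) : Prop := ∀ x : E, 0 ≤ ⟪x, T x⟫_ℂ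

/-- simple tensor v ⊗ b in ℂⁿ ⊗ H_B, modeled as `PiLp 2` -/
def tp {n : ℕ} {HB : Type*} [NormedAddCommGroup HB] [InnerProductSpace ℂ HB]
    (v : EuclideanSpace ℂ (Fin n)) (b : HB) : PiLp 2 (fun _ : Fin n => HB) :=
  (WithLp.equiv 2 _).symm fun i => v i • b

/-- operator tensor M ⊗ X on ℂⁿ ⊗ H_B, where M is a matrix on ℂⁿ -/
def opT {n : ℕ} {HB : Type*} [NormedAddCommGroup HB] [InnerProductSpace ℂ HB]
    (M : Matrix (Fin n) (Fin n) ℂ) (X : HB →ₗ[ℂ] HB) :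
    PiLp 2 (fun _ : Fin n => HB) →ₗ[ℂ] PiLp 2 (fun _ : Fin n => HB) where
  toFun f := (WithLp.equiv 2 _).symm fun i => ∑ j, M i j • X (f j)
  map_add' f g := by
    ext i
    simp only [WithLp.equiv_symm_apply, PiLp.toLp_apply, PiLp.add_apply, map_add, smul_add]
    exact Finset.sum_add_distrib
  map_smul' c f := by
    ext i
    simp only [WithLp.equiv_symm_apply, PiLp.toLp_apply, PiLp.smul_apply, map_smul, RingHom.id_apply,
      Finset.smul_sum]
    exact Finset.sum_congr rfl fun j _ => (smul_comm _ _ _)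

/-- outer product matrix |v⟩⟨v| -/
def outerM {n : ℕ} (v : EuclideanSpace ℂ (Fin n)) : Matrix (Fin n) (Fin n) ℂ :=
  fun i j => v i * conj (v j)

/-- orthogonal projection onto a subspace, as an operator -/
def projOp {E : Type*} [NormedAddCommGroup E] [InnerProductSpace ℂ E]
    [FiniteDimensional ℂ E] (K : Submodule ℂ E) : E →ₗ[ℂ] E :=
  (K.subtypeL.comp K.orthogonalProjectionOnto).toLinearMap


/-!
Put `A m = P (|0⟩⟨0| ⊗ Φ⁰ₘ) P` and `B m = P (|1⟩⟨1| ⊗ Φ¹ₘ) P`. Both are positive operators and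
`A m + B m = Πₘ = |xₘ⟩⟨xₘ|`, so `A m` vanishes on `xₘ^⊥`; being symmetric it is then a multiple
`cₘ Πₘ`, and comparing `⟪xₘ, A m xₘ⟫` with `⟪xₘ, Πₘ xₘ⟫` gives `0 ≤ cₘ ≤ 1`. Summing,
`∑ cₘ Πₘ = P (|0⟩⟨0| ⊗ P_B⁽⁰⁾) P`, and `P_B⁽⁰⁾` may be replaced by the identity because
`|0⟩⟨0| ⊗ X` sends `π` and `π⊥` to `|0⟩ ⊗ X η₀` and `|0⟩ ⊗ X ν₀`, with `η₀, ν₀ ∈ H_B⁽⁰⁾`.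
-/

namespace LinearMap

variable {𝕜 V : Type*} [RCLike 𝕜] [NormedAddCommGroup V] [InnerProductSpace 𝕜 V]

open RCLike in
theorem IsPositive.apply_eq_zero_of_inner_self_eq_zero {T : V →ₗ[𝕜] V} (hT : T.IsPositive)
    {y : V} (hy : ⟪T y, y⟫_𝕜 = 0) : T y = 0 := by
  -- `t ↦ re ⟪T (y + t • T y), y + t • T y⟫` is a nonnegative quadratic with no constant term,
  -- so its linear coefficient `2 ‖T y‖²` vanishes.
  have hquad : ∀ t : ℝ, 0 ≤ re ⟪T (T y), T y⟫_𝕜 * (t * t) + 2 * ‖T y‖ ^ 2 * t + 0 := by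
    intro t
    have h := hT.re_inner_nonneg_left (y + (t : 𝕜) • T y)
    have hsymm : ⟪T (T y), y⟫_𝕜 = ⟪T y, T y⟫_𝕜 := hT.isSymmetric (T y) y
    simp only [map_add, map_smul, inner_add_left, inner_add_right, inner_smul_left,
      inner_smul_right, conj_ofReal, hy, hsymm, inner_self_eq_norm_sq_to_K] at h
    simp only [map_add, re_ofReal_mul, map_zero] at h
    norm_cast at h
    linear_combination h
  simpa [discrim] using discrim_le_zero hquad

theorem IsPositive.conj_of_isSymmetric {T S : V →ₗ[𝕜] V} (hT : T.IsPositive)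
    (hS : S.IsSymmetric) : (S ∘ₗ T ∘ₗ S).IsPositive :=
  ⟨fun x y => by simp only [comp_apply, hS _ y, hT.isSymmetric _ (S y), hS x],
    fun x => by simpa only [comp_apply, hS _ x] using hT.re_inner_nonneg_left (S x)⟩

end LinearMap

theorem isPSD_iff_isPositive (T : E →ₗ[ℂ] E) : IsPSD T ↔ T.IsPositive := by
  rw [LinearMap.isPositive_iff_complex]
  refine forall_congr' fun x => ?_
  rw [← inner_conj_symm x (T x), Complex.nonneg_iff, Complex.ext_iff]
  simp only [Complex.conj_re, Complex.conj_im, RCLike.re_to_complex, Complex.ofReal_re,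
    Complex.ofReal_im, true_and]
  constructor <;> rintro ⟨h1, h2⟩ <;> constructor <;> linarith

@[simp]
theorem rankOne_apply (x : F) (y z : E) : rankOne x y z = ⟪y, z⟫_ℂ • x := rfl

theorem comp_rankOne {G : Type*} [NormedAddCommGroup G] [InnerProductSpace ℂ G]
    (S : F →ₗ[ℂ] G) (x : F) (y : E) : S ∘ₗ rankOne x y = rankOne (S x) y := by
  ext z
  simp

theorem isSymmetric_rankOne_self (x : E) : (rankOne x x).IsSymmetric := fun y z => by
  simp only [rankOne_apply, inner_smul_left, inner_smul_right, inner_conj_symm, mul_comm]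

theorem LinearMap.IsSymmetric.eq_smul_rankOne_of_orthogonal_le_ker {T : E →ₗ[ℂ] E}
    (hT : T.IsSymmetric) {x : E} (hker : (ℂ ∙ x)ᗮ ≤ LinearMap.ker T) :
    T = (⟪x, T x⟫_ℂ / ((‖x‖ ^ 4 : ℝ) : ℂ)) • rankOne x x := by
  have hproj : ∀ v, T v = (⟪x, v⟫_ℂ / ((‖x‖ ^ 2 : ℝ) : ℂ)) • T x := fun v => by
    have h := hker ((ℂ ∙ x).sub_starProjection_mem_orthogonal v)
    rw [LinearMap.mem_ker, map_sub, sub_eq_zero, Submodule.starProjection_singleton,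
      map_smul] at h
    exact h
  have hTx : T x = (⟪x, T x⟫_ℂ / ((‖x‖ ^ 2 : ℝ) : ℂ)) • x := by
    refine ext_inner_left ℂ fun w => ?_
    rw [← hT, hproj w, inner_smul_left, inner_smul_right, hT, map_div₀, inner_conj_symm,
      Complex.conj_ofReal]
    ring
  ext v
  conv_lhs => rw [hproj v, hTx]
  rw [smul_smul, LinearMap.smul_apply, rankOne_apply, smul_smul]
  congr 1
  push_cast
  ring

theorem LinearMap.IsPositive.eq_smul_rankOne_of_add_eq {A B : E →ₗ[ℂ] E} (hA : A.IsPositive)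
    (hB : B.IsPositive) {x : E} (h : A + B = rankOne x x) :
    ∃ c : ℝ, 0 ≤ c ∧ c ≤ 1 ∧ A = (c : ℂ) • rankOne x x := by
  have hker : (ℂ ∙ x)ᗮ ≤ LinearMap.ker A := fun y hy => by
    rw [Submodule.mem_orthogonal_singleton_iff_inner_right] at hy
    have hsum : ⟪A y, y⟫_ℂ + ⟪B y, y⟫_ℂ = 0 := by
      rw [← inner_add_left, ← LinearMap.add_apply, h, rankOne_apply, inner_smul_left, hy,
        map_zero, zero_mul]
    refine hA.apply_eq_zero_of_inner_self_eq_zero (le_antisymm ?_ (hA.inner_nonneg_left y))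
    exact hsum ▸ le_add_of_nonneg_right (hB.inner_nonneg_left y)
  obtain ⟨r, hr0, hr⟩ := RCLike.nonneg_iff_exists_ofReal.1 (hA.inner_nonneg_right x)
  have hr1 : r ≤ ‖x‖ ^ 4 := by
    have hsum : ⟪x, A x⟫_ℂ + ⟪x, B x⟫_ℂ = ((‖x‖ ^ 4 : ℝ) : ℂ) := by
      rw [← inner_add_right, ← LinearMap.add_apply, h, rankOne_apply, inner_smul_right,
        inner_self_eq_norm_sq_to_K, RCLike.ofReal_eq_complex_ofReal]
      push_cast
      ring
    rw [← Complex.real_le_real, ← hsum]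
    exact hr ▸ le_add_of_nonneg_right (hB.inner_nonneg_right x)
  refine ⟨r / ‖x‖ ^ 4, by positivity, div_le_one_of_le₀ hr1 (by positivity), ?_⟩
  rw [hA.isSymmetric.eq_smul_rankOne_of_orthogonal_le_ker hker, ← hr]
  simp

section Tensor

variable {n : ℕ} {HB : Type*} [NormedAddCommGroup HB] [InnerProductSpace ℂ HB]

/-- The partial inner product `(⟨v| ⊗ I) f` of `f ∈ ℂⁿ ⊗ H_B` with `v ∈ ℂⁿ`. -/
def partialInner (v : EuclideanSpace ℂ (Fin n)) (f : PiLp 2 (fun _ : Fin n => HB)) : HB :=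
  ∑ j, conj (v j) • f j

theorem inner_tp_right (f : PiLp 2 (fun _ : Fin n => HB)) (v : EuclideanSpace ℂ (Fin n))
    (b : HB) : ⟪f, tp v b⟫_ℂ = ⟪partialInner v f, b⟫_ℂ := by
  simp only [PiLp.inner_apply, tp, partialInner, sum_inner, inner_smul_left, inner_smul_right,
    Complex.conj_conj, WithLp.equiv_symm_apply]

theorem partialInner_tp (v w : EuclideanSpace ℂ (Fin n)) (b : HB) :
    partialInner v (tp w b) = ⟪v, w⟫_ℂ • b := by
  simp only [partialInner, tp, PiLp.inner_apply, WithLp.equiv_symm_apply, PiLp.toLp_apply,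
    smul_smul, Finset.sum_smul, RCLike.inner_apply, mul_comm]

theorem opT_outerM_apply (v : EuclideanSpace ℂ (Fin n)) (X : HB →ₗ[ℂ] HB)
    (f : PiLp 2 (fun _ : Fin n => HB)) : opT (outerM v) X f = tp v (X (partialInner v f)) := by
  ext i
  simp only [opT, outerM, tp, partialInner, LinearMap.coe_mk, AddHom.coe_mk,
    WithLp.equiv_symm_apply, PiLp.toLp_apply, map_sum, map_smul, Finset.smul_sum, smul_smul]

theorem opT_outerM_tp (v w : EuclideanSpace ℂ (Fin n)) (X : HB →ₗ[ℂ] HB) (b : HB) :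
    opT (outerM v) X (tp w b) = ⟪v, w⟫_ℂ • tp v (X b) := by
  rw [opT_outerM_apply, partialInner_tp, map_smul]
  ext i
  simp only [tp, WithLp.equiv_symm_apply, PiLp.toLp_apply, PiLp.smul_apply, smul_comm (v i)]

theorem IsPSD.opT_outerM {X : HB →ₗ[ℂ] HB} (hX : IsPSD X) (v : EuclideanSpace ℂ (Fin n)) :
    IsPSD (opT (outerM v) X) := fun f => by
  rw [opT_outerM_apply, inner_tp_right]
  exact hX _

theorem opT_sum {ι : Type*} (s : Finset ι) (A : Matrix (Fin n) (Fin n) ℂ)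
    (X : ι → HB →ₗ[ℂ] HB) : opT A (∑ m ∈ s, X m) = ∑ m ∈ s, opT A (X m) := by
  ext f i
  simp only [opT, LinearMap.coe_sum, Finset.sum_apply, Finset.smul_sum, WithLp.equiv_symm_apply,
    LinearMap.coe_mk, AddHom.coe_mk, WithLp.ofLp_sum]
  exact Finset.sum_comm

theorem opT_outerM_tp_add_tp {v w : EuclideanSpace ℂ (Fin n)} (hv : ‖v‖ = 1)
    (hvw : ⟪v, w⟫_ℂ = 0) (X : HB →ₗ[ℂ] HB) (b b' : HB) :
    opT (outerM v) X (tp v b + tp w b') = tp v (X b) := by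
  rw [map_add, opT_outerM_tp, opT_outerM_tp, hvw, inner_self_eq_norm_sq_to_K, hv]
  simp

end Tensor

theorem projOp_apply_of_mem {V : Type*} [NormedAddCommGroup V] [InnerProductSpace ℂ V]
    [FiniteDimensional ℂ V] {K : Submodule ℂ V} {b : V} (hb : b ∈ K) : projOp K b = b :=
  K.starProjection_eq_self_iff.2 hb

theorem lemma2_necessity_general
    {HB : Type*} [NormedAddCommGroup HB] [InnerProductSpace ℂ HB] [FiniteDimensional ℂ HB]
    (M : ℕ)
    (e : Fin 2 → EuclideanSpace ℂ (Fin 2)) (he : Orthonormal ℂ e)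
    (η ν : Fin 2 → HB) (pi pip : PiLp 2 (fun _ : Fin 2 => HB))
    (hpi : pi = tp (e 0) (η 0) + tp (e 1) (η 1))
    (hpip : pip = tp (e 0) (ν 0) + tp (e 1) (ν 1))
    (Pv : Fin M → (PiLp 2 (fun _ : Fin 2 => HB) →ₗ[ℂ] PiLp 2 (fun _ : Fin 2 => HB)))
    (hrank : ∀ m, ∃ x, x ≠ 0 ∧ x ∈ Submodule.span ℂ {pi, pip} ∧ Pv m = rankOne x x)
    (Φ : Fin 2 → Fin M → (HB →ₗ[ℂ] HB))
    (hΦpsd : ∀ k m, IsPSD (Φ k m))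
    (hΦsum : ∀ k, ∑ m, Φ k m = projOp (Submodule.span ℂ {η k, ν k}))
    (hrecon : ∀ m, Pv m =
      (rankOne pi pi + rankOne pip pip) ∘ₗ
        (opT (outerM (e 0)) (Φ 0 m) + opT (outerM (e 1)) (Φ 1 m)) ∘ₗ
        (rankOne pi pi + rankOne pip pip)) :
    ∃ c : Fin M → ℝ, (∀ m, 0 ≤ c m ∧ c m ≤ 1) ∧
      ∑ m, (c m : ℂ) • Pv m =
        (rankOne pi pi + rankOne pip pip) ∘ₗ opT (outerM (e 0)) LinearMap.id ∘ₗ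
          (rankOne pi pi + rankOne pip pip) := by
  set P := rankOne pi pi + rankOne pip pip
  have hP : P.IsSymmetric := (isSymmetric_rankOne_self pi).add (isSymmetric_rankOne_self pip)
  have hpos : ∀ k m, (P ∘ₗ opT (outerM (e k)) (Φ k m) ∘ₗ P).IsPositive := fun k m =>
    ((isPSD_iff_isPositive _).1 ((hΦpsd k m).opT_outerM (e k))).conj_of_isSymmetric hP
  have hc : ∀ m, ∃ c : ℝ, 0 ≤ c ∧ c ≤ 1 ∧
      P ∘ₗ opT (outerM (e 0)) (Φ 0 m) ∘ₗ P = (c : ℂ) • Pv m := by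
    intro m
    obtain ⟨x, -, -, hx⟩ := hrank m
    rw [hx]
    refine (hpos 0 m).eq_smul_rankOne_of_add_eq (hpos 1 m) ?_
    rw [← hx, hrecon m, LinearMap.add_comp P, LinearMap.comp_add _ _ P]
  choose c hc0 hc1 hcPv using hc
  refine ⟨c, fun m => ⟨hc0 m, hc1 m⟩, ?_⟩
  have hπ : ∀ (X : HB →ₗ[ℂ] HB) (b b' : HB),
      opT (outerM (e 0)) X (tp (e 0) b + tp (e 1) b') = tp (e 0) (X b) :=
    opT_outerM_tp_add_tp (he.1 0) (he.inner_eq_zero (by decide))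
  have hη : projOp (Submodule.span ℂ {η 0, ν 0}) (η 0) = η 0 :=
    projOp_apply_of_mem (Submodule.subset_span (by simp))
  have hν : projOp (Submodule.span ℂ {η 0, ν 0}) (ν 0) = ν 0 :=
    projOp_apply_of_mem (Submodule.subset_span (by simp))
  calc ∑ m, (c m : ℂ) • Pv m = ∑ m, P ∘ₗ opT (outerM (e 0)) (Φ 0 m) ∘ₗ P := by
        simp only [hcPv]
    _ = P ∘ₗ opT (outerM (e 0)) (projOp (Submodule.span ℂ {η 0, ν 0})) ∘ₗ P := by
        rw [← hΦsum 0, opT_sum]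
        ext z
        simp only [LinearMap.comp_apply, LinearMap.coe_sum, Finset.sum_apply, map_sum]
    _ = P ∘ₗ opT (outerM (e 0)) LinearMap.id ∘ₗ P := by
        simp only [P, LinearMap.comp_add, comp_rankOne, hpi, hpip, hπ, hη, hν, LinearMap.id_apply]

/-- necessity direction of Lemma 2: if a rank-one POVM {Π_m} on the 2D
subspace H = span(π, π⊥) of ℂ² ⊗ H_B is realized as
Π_m = P(|0⟩⟨0|⊗Φ_m⁰ + |1⟩⟨1|⊗Φ_m¹)P with POVMs Φ⁰, Φ¹ on H_B⁽⁰⁾, H_B⁽¹⁾, then there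
are c_m ∈ [0,1] with Σ c_m Π_m = Z_0 = P(|0⟩⟨0|⊗I_B)P. -/
theorem lemma2_necessity
    {HB : Type*} [NormedAddCommGroup HB] [InnerProductSpace ℂ HB] [FiniteDimensional ℂ HB]
    (M : ℕ)
    (e : Fin 2 → EuclideanSpace ℂ (Fin 2)) (he : Orthonormal ℂ e)
    (η ν : Fin 2 → HB) (pi pip : PiLp 2 (fun _ : Fin 2 => HB))
    (hON : Orthonormal ℂ ![pi, pip])
    (hpi : pi = tp (e 0) (η 0) + tp (e 1) (η 1))
    (hpip : pip = tp (e 0) (ν 0) + tp (e 1) (ν 1))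
    (horth : ∀ k : Fin 2, ⟪η k, ν k⟫_ℂ = 0)
    (Pv : Fin M → (PiLp 2 (fun _ : Fin 2 => HB) →ₗ[ℂ] PiLp 2 (fun _ : Fin 2 => HB)))
    (hrank : ∀ m, ∃ x, x ≠ 0 ∧ x ∈ Submodule.span ℂ {pi, pip} ∧ Pv m = rankOne x x)
    (hsum : ∑ m, Pv m = rankOne pi pi + rankOne pip pip)
    (Φ : Fin 2 → Fin M → (HB →ₗ[ℂ] HB))
    (hΦpsd : ∀ k m, IsPSD (Φ k m))
    (hΦrange : ∀ k m, LinearMap.range (Φ k m) ≤ Submodule.span ℂ {η k, ν k})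
    (hΦsum : ∀ k, ∑ m, Φ k m = projOp (Submodule.span ℂ {η k, ν k}))
    (hrecon : ∀ m, Pv m =
      (rankOne pi pi + rankOne pip pip) ∘ₗ
        (opT (outerM (e 0)) (Φ 0 m) + opT (outerM (e 1)) (Φ 1 m)) ∘ₗ
        (rankOne pi pi + rankOne pip pip)) :
    ∃ c : Fin M → ℝ, (∀ m, 0 ≤ c m ∧ c m ≤ 1) ∧
      ∑ m, (c m : ℂ) • Pv m =
        (rankOne pi pi + rankOne pip pip) ∘ₗ opT (outerM (e 0)) LinearMap.id ∘ₗ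
          (rankOne pi pi + rankOne pip pip) :=
  lemma2_necessity_general M e he η ν pi pip hpi hpip Pv hrank Φ hΦpsd hΦsum hrecon
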